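/- arXiv:1607.03233 — 17 statements merged into one kernel-verified Lean document; each statement's English description precedes it below -/
import Mathlib

section
/- Let $T_1, T_2, T_3 > 0$ be real numbers. Then there exists a unique real number $p > 0$ such that $\frac{p}{p+T_1} + \frac{p}{p+T_2} + \frac{p}{p+T_3} = 1$. -/
/-! The left-hand side `f p = ∑ p / (p + Tᵢ)` is continuous and strictly increasing on `[0, ∞)`,
with `f 0 = 0` and `f (T₁ + T₂ + T₃) ≥ 3/2` since each `Tᵢ ≤ T₁ + T₂ + T₃`. The intermediate value
theorem gives a root of `f p = 1` in `(0, T₁ + T₂ + T₃]`, and strict monotonicity makes it unique. -/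

open Set

lemma strictMonoOn_div_add_const {T : ℝ} (hT : 0 < T) :
    StrictMonoOn (fun p : ℝ => p / (p + T)) (Ici 0) := by
  intro a ha b _ hab
  simp only [mem_Ici] at ha
  rw [div_lt_div_iff₀ (by linarith) (by linarith)]
  nlinarith

lemma continuousOn_div_add_const {T : ℝ} (hT : 0 < T) :
    ContinuousOn (fun p : ℝ => p / (p + T)) (Ici 0) :=
  continuousOn_id.div (continuousOn_id.add continuousOn_const) fun x hx => by
    simp only [mem_Ici] at hx
    linarith

lemma half_le_div_add_const {T p : ℝ} (hT : 0 < T) (hTp : T ≤ p) : 1 / 2 ≤ p / (p + T) := by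
  rw [le_div_iff₀ (by linarith)]
  linarith

theorem stmt_0 (T1 T2 T3 : ℝ) (h1 : 0 < T1) (h2 : 0 < T2) (h3 : 0 < T3) :
    ∃! p : ℝ, 0 < p ∧ p / (p + T1) + p / (p + T2) + p / (p + T3) = 1 := by
  set f : ℝ → ℝ := fun p => p / (p + T1) + p / (p + T2) + p / (p + T3) with hf
  have hmono : StrictMonoOn f (Ici 0) :=
    ((strictMonoOn_div_add_const h1).add (strictMonoOn_div_add_const h2)).add
      (strictMonoOn_div_add_const h3)
  have hcont : ContinuousOn f (Ici 0) :=
    ((continuousOn_div_add_const h1).add (continuousOn_div_add_const h2)).add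
      (continuousOn_div_add_const h3)
  set S := T1 + T2 + T3
  have hS : 0 ≤ S := by positivity
  have hfS : 1 ≤ f S := by
    have := half_le_div_add_const h1 (show T1 ≤ S by linarith)
    have := half_le_div_add_const h2 (show T2 ≤ S by linarith)
    have := half_le_div_add_const h3 (show T3 ≤ S by linarith)
    simp only [hf]
    linarith
  obtain ⟨c, ⟨hc, -⟩, hfc⟩ : (1 : ℝ) ∈ f '' Ioc 0 S :=
    intermediate_value_Ioc hS (hcont.mono Icc_subset_Ici_self) ⟨by simp [hf], hfS⟩
  refine ⟨c, ⟨hc, hfc⟩, fun y ⟨hy, hfy⟩ => ?_⟩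
  exact hmono.injOn (mem_Ici.2 hy.le) (mem_Ici.2 hc.le) (hfy.trans hfc.symm)
end

section
/- Let $T_1 > 0$ and $T_2, T_3 < 0$ be real numbers, and define $\bar{f}(p) = 2p^3 + (T_1+T_2+T_3)p^2 - T_1 T_2 T_3$. Then $\bar{f}$ has a root in the open interval $(-T_1, 0)$ if and only if either (i) $-\frac{T_1+T_2+T_3}{3} < 0$ and $\bar{f}(-\frac{T_1+T_2+T_3}{3}) \ge 0$, or (ii) $\bar{f}(-T_1) > 0$. -/
/-!
Write `S = T₁ + T₂ + T₃` and `c = -S/3`. On `p ≤ 0` the cubic is maximal at its critical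
point `c` when `S ≥ 0`, since `f̄(c) - f̄(p) = -(p - c)²(2p + c)`, and at `0` when `S ≤ 0`.
Since `f̄(0) = -T₁T₂T₃ < 0`, a root in `(-T₁, 0)` forces `S > 0` and `f̄(c) ≥ 0`; conversely
either sign condition gives a root by the intermediate value theorem, as `-T₁ < c`.
-/

open Set

def fBar (S Q p : ℝ) : ℝ := 2 * p ^ 3 + S * p ^ 2 - Q

@[simp]
lemma fBar_zero (S Q : ℝ) : fBar S Q 0 = -Q := by
  simp [fBar]

@[fun_prop]
lemma continuous_fBar (S Q : ℝ) : Continuous (fBar S Q) := by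
  unfold fBar
  fun_prop

lemma fBar_le_fBar_vertex {S Q p : ℝ} (hS : 0 ≤ S) (hp : p ≤ 0) :
    fBar S Q p ≤ fBar S Q (-S / 3) := by
  have key : fBar S Q (-S / 3) - fBar S Q p = -(p + S / 3) ^ 2 * (2 * p - S / 3) := by
    unfold fBar
    ring
  nlinarith [sq_nonneg (p + S / 3)]

lemma fBar_le_fBar_zero {S Q p : ℝ} (hS : S ≤ 0) (hp : p ≤ 0) : fBar S Q p ≤ fBar S Q 0 := by
  have key : fBar S Q 0 - fBar S Q p = -p ^ 2 * (2 * p + S) := by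
    unfold fBar
    ring
  nlinarith [sq_nonneg p]

lemma exists_mem_Ico_eq_zero {f : ℝ → ℝ} {a b : ℝ} (hab : a ≤ b) (hf : ContinuousOn f (Icc a b))
    (ha : 0 ≤ f a) (hb : f b < 0) : ∃ x ∈ Ico a b, f x = 0 := by
  obtain ⟨x, hx, hfx⟩ := intermediate_value_Icc' hab hf ⟨hb.le, ha⟩
  refine ⟨x, ⟨hx.1, lt_of_le_of_ne hx.2 ?_⟩, hfx⟩
  rintro rfl
  exact hb.ne hfx

theorem stmt_1 (T1 T2 T3 : ℝ) (h1 : 0 < T1) (h2 : T2 < 0) (h3 : T3 < 0)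
    (f : ℝ → ℝ) (hf : ∀ p, f p = 2 * p ^ 3 + (T1 + T2 + T3) * p ^ 2 - T1 * T2 * T3) :
    (∃ p, p ∈ Set.Ioo (-T1) 0 ∧ f p = 0) ↔
      ((-(T1 + T2 + T3) / 3 < 0 ∧ 0 ≤ f (-(T1 + T2 + T3) / 3)) ∨ 0 < f (-T1)) := by
  obtain rfl : f = fBar (T1 + T2 + T3) (T1 * T2 * T3) := funext hf
  have hf0 : fBar (T1 + T2 + T3) (T1 * T2 * T3) 0 < 0 := by
    rw [fBar_zero, neg_lt_zero]
    exact mul_pos_of_neg_of_neg (mul_neg_of_pos_of_neg h1 h2) h3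
  constructor
  · rintro ⟨p, ⟨-, hp⟩, hroot⟩
    have hS : 0 < T1 + T2 + T3 := by
      by_contra! hS
      linarith [fBar_le_fBar_zero (Q := T1 * T2 * T3) hS hp.le]
    exact Or.inl ⟨by linarith, hroot ▸ fBar_le_fBar_vertex hS.le hp.le⟩
  · rintro (⟨hc, hfc⟩ | hfT1)
    · obtain ⟨x, hx, hx0⟩ := exists_mem_Ico_eq_zero hc.le (by fun_prop) hfc hf0
      exact ⟨x, ⟨by linarith [hx.1], hx.2⟩, hx0⟩
    · obtain ⟨x, hx, hx0⟩ := exists_mem_Ico_eq_zero (by linarith) (by fun_prop) hfT1.le hf0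
      exact ⟨x, ⟨lt_of_le_of_ne hx.1 (by rintro rfl; exact hfT1.ne' hx0), hx.2⟩, hx0⟩
end

section
/- Let $T_1 > 0$ and $T_2, T_3 < 0$, and define $\bar{f}(p) = 2p^3 + (T_1+T_2+T_3)p^2 - T_1 T_2 T_3$. If $\bar{f}(-T_1) < 0$, $-\frac{T_1+T_2+T_3}{3} < 0$, and $\bar{f}(-\frac{T_1+T_2+T_3}{3}) > 0$, then $\bar{f}$ has exactly two roots in the open interval $(-T_1, 0)$. -/
/-!
On `(-∞, 0]` the derivative `2p(3p + S)` of `f` (with `S = T₁ + T₂ + T₃ > 0`) changes sign only at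
`m = -S/3`, so `f` increases strictly on `[-T₁, m]` and decreases strictly on `[m, 0]`. Since
`f(-T₁) < 0 < f(m)` and `f(0) = -T₁T₂T₃ < 0`, the intermediate value theorem gives one zero on each
side of `m`, and strict monotonicity rules out any other.
-/

open Set

section Unimodal

variable {α δ : Type*} [ConditionallyCompleteLinearOrder α] [TopologicalSpace α] [OrderTopology α]
  [DenselyOrdered α] [LinearOrder δ] [TopologicalSpace δ] [OrderClosedTopology δ]

theorem exists_unique_pair_eq_of_strictMonoOn_of_strictAntiOn {f : α → δ} {a m b : α} {y : δ}
    (ham : a ≤ m) (hmb : m ≤ b) (hf : ContinuousOn f (Icc a b))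
    (hmono : StrictMonoOn f (Icc a m)) (hanti : StrictAntiOn f (Icc m b))
    (ha : f a < y) (hm : y < f m) (hb : f b < y) :
    ∃ p q : α, p ≠ q ∧ p ∈ Ioo a b ∧ q ∈ Ioo a b ∧ f p = y ∧ f q = y ∧
      ∀ r ∈ Ioo a b, f r = y → r = p ∨ r = q := by
  obtain ⟨p, hp, hfp⟩ := intermediate_value_Ioo ham (hf.mono (Icc_subset_Icc_right hmb)) ⟨ha, hm⟩
  obtain ⟨q, hq, hfq⟩ := intermediate_value_Ioo' hmb (hf.mono (Icc_subset_Icc_left ham)) ⟨hb, hm⟩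
  refine ⟨p, q, (hp.2.trans hq.1).ne, ⟨hp.1, hp.2.trans_le hmb⟩, ⟨ham.trans_lt hq.1, hq.2⟩,
    hfp, hfq, fun r hr hfr => ?_⟩
  rcases le_total r m with hrm | hmr
  · exact .inl <| hmono.injOn ⟨hr.1.le, hrm⟩ (Ioo_subset_Icc_self hp) (hfr.trans hfp.symm)
  · exact .inr <| hanti.injOn ⟨hmr, hr.2.le⟩ (Ioo_subset_Icc_self hq) (hfr.trans hfq.symm)

end Unimodal

section Cubic

variable (S C : ℝ)

theorem hasDerivAt_cubic (p : ℝ) :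
    HasDerivAt (fun p => 2 * p ^ 3 + S * p ^ 2 - C) (2 * p * (3 * p + S)) p := by
  refine (((hasDerivAt_pow 3 p).const_mul 2).add
    ((hasDerivAt_pow 2 p).const_mul S)).sub_const C |>.congr_deriv ?_
  norm_num
  ring

theorem continuous_cubic : Continuous fun p : ℝ => 2 * p ^ 3 + S * p ^ 2 - C := by
  fun_prop

theorem strictMonoOn_cubic {S : ℝ} (hS : 0 ≤ S) :
    StrictMonoOn (fun p => 2 * p ^ 3 + S * p ^ 2 - C) (Iic (-S / 3)) := by
  refine strictMonoOn_of_hasDerivWithinAt_pos (convex_Iic _) (continuous_cubic S C).continuousOn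
    (fun p _ => (hasDerivAt_cubic S C p).hasDerivWithinAt) fun p hp => ?_
  rw [interior_Iic, mem_Iio] at hp
  nlinarith

theorem strictAntiOn_cubic :
    StrictAntiOn (fun p => 2 * p ^ 3 + S * p ^ 2 - C) (Icc (-S / 3) 0) := by
  refine strictAntiOn_of_hasDerivWithinAt_neg (convex_Icc _ _) (continuous_cubic S C).continuousOn
    (fun p _ => (hasDerivAt_cubic S C p).hasDerivWithinAt) fun p hp => ?_
  rw [interior_Icc, mem_Ioo] at hp
  nlinarith

end Cubic

theorem stmt_2 (T1 T2 T3 : ℝ) (h1 : 0 < T1) (h2 : T2 < 0) (h3 : T3 < 0)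
    (f : ℝ → ℝ) (hf : ∀ p, f p = 2 * p ^ 3 + (T1 + T2 + T3) * p ^ 2 - T1 * T2 * T3)
    (ha : f (-T1) < 0) (hb : -(T1 + T2 + T3) / 3 < 0)
    (hc : 0 < f (-(T1 + T2 + T3) / 3)) :
    ∃ p q : ℝ, p ≠ q ∧ p ∈ Set.Ioo (-T1) 0 ∧ q ∈ Set.Ioo (-T1) 0 ∧
      f p = 0 ∧ f q = 0 ∧
      ∀ r ∈ Set.Ioo (-T1) 0, f r = 0 → r = p ∨ r = q := by
  obtain rfl : f = fun p => 2 * p ^ 3 + (T1 + T2 + T3) * p ^ 2 - T1 * T2 * T3 := funext hf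
  have hS : 0 < T1 + T2 + T3 := by linarith
  have hT1m : -T1 ≤ -(T1 + T2 + T3) / 3 := by linarith
  exact exists_unique_pair_eq_of_strictMonoOn_of_strictAntiOn hT1m hb.le
    (continuous_cubic _ _).continuousOn
    ((strictMonoOn_cubic _ hS.le).mono fun _ hp => hp.2) (strictAntiOn_cubic _ _) ha hc
    (by simpa using mul_pos_of_neg_of_neg (mul_neg_of_pos_of_neg h1 h2) h3)
end

section
/- Let $T_1 > 0$ and $T_2, T_3 < 0$, and define $\bar{f}(p) = 2p^3 + (T_1+T_2+T_3)p^2 - T_1 T_2 T_3$. If neither of the following holds: (i) $-\frac{T_1+T_2+T_3}{3} < 0$ and $\bar{f}(-\frac{T_1+T_2+T_3}{3}) \ge 0$; (ii) $\bar{f}(-T_1) > 0$; then $\bar{f}$ has no root in $(-T_1, 0)$. -/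
theorem stmt_3 (T1 T2 T3 : ℝ) (h1 : 0 < T1) (h2 : T2 < 0) (h3 : T3 < 0)
    (f : ℝ → ℝ) (hf : ∀ p, f p = 2 * p ^ 3 + (T1 + T2 + T3) * p ^ 2 - T1 * T2 * T3)
    (hi : ¬ (-(T1 + T2 + T3) / 3 < 0 ∧ 0 ≤ f (-(T1 + T2 + T3) / 3)))
    (hii : ¬ (0 < f (-T1))) :
    ¬ ∃ p, p ∈ Set.Ioo (-T1) 0 ∧ f p = 0 := by
  rintro ⟨p, ⟨hp1, hp2⟩, hroot⟩
  rw [hf] at hroot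
  have hT : 0 < T1 * T2 * T3 := mul_pos_of_neg_of_neg (mul_neg_of_pos_of_neg h1 h2) h3
  have hpsq : 0 < p ^ 2 := by nlinarith
  by_cases hS : T1 + T2 + T3 ≤ 0
  · -- c ≥ 0: f p = p²(2p+S) - T1T2T3 < 0
    have h2p : 2 * p + (T1 + T2 + T3) < 0 := by linarith
    nlinarith [mul_pos hpsq (neg_pos.mpr h2p)]
  · push_neg at hS hi
    set c : ℝ := -(T1 + T2 + T3) / 3 with hc
    have hclt : c < 0 := by rw [hc]; linarith
    have hfc : f c < 0 := hi hclt
    rw [hf] at hfc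
    -- f p - f c = (p-c)²(2p+c) ≤ 0
    nlinarith [mul_nonpos_of_nonneg_of_nonpos (sq_nonneg (p - c)) (by linarith : 2 * p + c ≤ 0), sq_nonneg (p - c)]
end

section
/- Let $T_1 > 0$. Then the set of quadruples $(v_1, v_2, v_3, c)$ with $v_1, v_2, v_3, c > 0$ satisfying the system $2 x_2 x_3 / (v_2 v_3) = c T_1$, $2 x_1 x_3 / (v_1 v_3) = 0$, $2 x_1 x_2 / (v_1 v_2) = 0$, where $x_1 = (v_2 + v_3 - v_1)$, $x_2 = (v_1 + v_3 - v_2)$, $x_3 = (v_1 + v_2 - v_3)$, is exactly the set $\{(v_2 + v_3, v_2, v_3, 8/T_1) : v_2, v_3 > 0\}$. -/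
theorem stmt_4 (T1 : ℝ) (hT1 : 0 < T1) (v1 v2 v3 c : ℝ) :
    (0 < v1 ∧ 0 < v2 ∧ 0 < v3 ∧ 0 < c ∧
      2 * ((v1 + v3 - v2) * (v1 + v2 - v3)) / (v2 * v3) = c * T1 ∧
      2 * ((v2 + v3 - v1) * (v1 + v2 - v3)) / (v1 * v3) = 0 ∧
      2 * ((v2 + v3 - v1) * (v1 + v3 - v2)) / (v1 * v2) = 0) ↔
    (0 < v2 ∧ 0 < v3 ∧ v1 = v2 + v3 ∧ c = 8 / T1) := by
  constructor
  · rintro ⟨h1, h2, h3, hc, e1, e2, e3⟩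
    have hv13 : v1 * v3 ≠ 0 := by positivity
    have hv12 : v1 * v2 ≠ 0 := by positivity
    have hv23 : v2 * v3 ≠ 0 := by positivity
    have n2 : (v2 + v3 - v1) * (v1 + v2 - v3) = 0 := by
      have := (div_eq_zero_iff.mp e2).resolve_right hv13
      linarith
    have n3 : (v2 + v3 - v1) * (v1 + v3 - v2) = 0 := by
      have := (div_eq_zero_iff.mp e3).resolve_right hv12
      linarith
    have hx1 : v2 + v3 - v1 = 0 := by
      by_contra h
      have a := (mul_eq_zero.mp n2).resolve_left h
      have b := (mul_eq_zero.mp n3).resolve_left h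
      linarith
    have hv1 : v1 = v2 + v3 := by linarith
    refine ⟨h2, h3, hv1, ?_⟩
    subst hv1
    have : (8 : ℝ) = c * T1 := by
      rw [← e1]
      field_simp
      ring
    field_simp
    linarith
  · rintro ⟨h2, h3, hv1, hc⟩
    subst hv1; subst hc
    refine ⟨by linarith, h2, h3, by positivity, ?_, by ring_nf, ?_⟩
    · field_simp
      ring
    · ring_nf
end

section
/- Suppose $(v_1, v_2, v_3)$ with $v_1, v_2, v_3 > 0$ satisfies the system $2 v_1 x_2 x_3 = T_1$, $2 v_2 x_1 x_3 = T_2$, $2 v_3 x_1 x_2 = T_3$, where $x_1 = v_2 + v_3 - v_1$, $x_2 = v_1 + v_3 - v_2$, $x_3 = v_1 + v_2 - v_3$, and suppose $x_1 x_2 x_3 (x_1 + x_2 + x_3) \neq 0$. Then $p := x_1 x_2 x_3$ satisfies $\frac{p}{p+T_1} + \frac{p}{p+T_2} + \frac{p}{p+T_3} = 1$, and moreover $x_i = \frac{q}{p + T_i}$ for $i = 1, 2, 3$, where $q = p(x_1 + x_2 + x_3)$. -/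
theorem stmt_5 (T1 T2 T3 v1 v2 v3 : ℝ)
    (hv1 : 0 < v1) (hv2 : 0 < v2) (hv3 : 0 < v3)
    (x1 x2 x3 : ℝ)
    (hx1 : x1 = v2 + v3 - v1) (hx2 : x2 = v1 + v3 - v2) (hx3 : x3 = v1 + v2 - v3)
    (e1 : 2 * v1 * (x2 * x3) = T1) (e2 : 2 * v2 * (x1 * x3) = T2)
    (e3 : 2 * v3 * (x1 * x2) = T3)
    (hne : x1 * x2 * x3 * (x1 + x2 + x3) ≠ 0) :
    (x1 * x2 * x3) / (x1 * x2 * x3 + T1) + (x1 * x2 * x3) / (x1 * x2 * x3 + T2)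
        + (x1 * x2 * x3) / (x1 * x2 * x3 + T3) = 1 ∧
      x1 = (x1 * x2 * x3 * (x1 + x2 + x3)) / (x1 * x2 * x3 + T1) ∧
      x2 = (x1 * x2 * x3 * (x1 + x2 + x3)) / (x1 * x2 * x3 + T2) ∧
      x3 = (x1 * x2 * x3 * (x1 + x2 + x3)) / (x1 * x2 * x3 + T3) := by
  have h1 : x1 ≠ 0 := fun h => hne (by rw [h]; ring)
  have h2 : x2 ≠ 0 := fun h => hne (by rw [h]; ring)
  have h3 : x3 ≠ 0 := fun h => hne (by rw [h]; ring)
  have hs : x1 + x2 + x3 ≠ 0 := fun h => hne (by rw [h]; ring)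
  have hv1' : 2 * v1 = x2 + x3 := by rw [hx2, hx3]; ring
  have hv2' : 2 * v2 = x1 + x3 := by rw [hx1, hx3]; ring
  have hv3' : 2 * v3 = x1 + x2 := by rw [hx1, hx2]; ring
  have hT1 : x1 * x2 * x3 + T1 = x2 * x3 * (x1 + x2 + x3) := by
    rw [← e1, hv1']; ring
  have hT2 : x1 * x2 * x3 + T2 = x1 * x3 * (x1 + x2 + x3) := by
    rw [← e2, hv2']; ring
  have hT3 : x1 * x2 * x3 + T3 = x1 * x2 * (x1 + x2 + x3) := by
    rw [← e3, hv3']; ring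
  rw [hT1, hT2, hT3]
  refine ⟨?_, ?_, ?_, ?_⟩ <;> field_simp <;> ring
end

section
/- Let $p, T_1, T_2, T_3$ be real numbers with $p + T_i \neq 0$ for $i = 1,2,3$ and $p(p+T_1)(p+T_2)(p+T_3) $ having a real cube root $q$ (i.e. $q^3 = p(p+T_1)(p+T_2)(p+T_3)$). If $\frac{p}{p+T_1} + \frac{p}{p+T_2} + \frac{p}{p+T_3} = 1$, then setting $x_i = \frac{q}{p+T_i}$, the triple $(x_1, x_2, x_3)$ satisfies $(x_2+x_3)x_2x_3 = T_1$, $(x_1+x_3)x_1x_3 = T_2$, and $(x_1+x_2)x_1x_2 = T_3$. -/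
theorem stmt_6 (p T1 T2 T3 q : ℝ)
    (h1 : p + T1 ≠ 0) (h2 : p + T2 ≠ 0) (h3 : p + T3 ≠ 0)
    (hq : q ^ 3 = p * (p + T1) * (p + T2) * (p + T3))
    (heq : p / (p + T1) + p / (p + T2) + p / (p + T3) = 1) :
    (q / (p + T2) + q / (p + T3)) * (q / (p + T2)) * (q / (p + T3)) = T1 ∧
    (q / (p + T1) + q / (p + T3)) * (q / (p + T1)) * (q / (p + T3)) = T2 ∧
    (q / (p + T1) + q / (p + T2)) * (q / (p + T1)) * (q / (p + T2)) = T3 := by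
  field_simp at heq
  refine ⟨?_, ?_, ?_⟩ <;> field_simp
  · linear_combination (2*p+T2+T3)*hq + (p+T2)*(p+T3)*heq
  · linear_combination (2*p+T1+T3)*hq + (p+T1)*(p+T3)*heq
  · linear_combination (2*p+T1+T2)*hq + (p+T1)*(p+T2)*heq
end

section
/- Let $T_1 > 0$, $T_2 < 0$, $T_3 < 0$ with $-T_1 < T_3$. Then there exists a unique $p \in (-T_1, T_3)$ such that $\frac{p}{p+T_1} + \frac{p}{p+T_2} + \frac{p}{p-T_3} = 1$. -/
theorem stmt_7 (T1 T2 T3 : ℝ) (h1 : 0 < T1) (h2 : T2 < 0) (h3 : T3 < 0)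
    (h : -T1 < T3) :
    ∃! p : ℝ, p ∈ Set.Ioo (-T1) T3 ∧
      p / (p + T1) + p / (p + T2) + p / (p - T3) = 1 := by
  set g : ℝ → ℝ := fun p => 2*p^3 + (T1+T2-T3)*p^2 + T1*T2*T3 with hg
  have hK : 0 < T1*T2*T3 := by nlinarith [mul_pos_of_neg_of_neg h2 h3]
  have key : ∀ p ∈ Set.Ioo (-T1) T3,
      (p / (p + T1) + p / (p + T2) + p / (p - T3) = 1 ↔ g p = 0) := by
    rintro p ⟨hp1, hp2⟩
    have d1 : p + T1 ≠ 0 := by nlinarith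
    have d2 : p + T2 ≠ 0 := by nlinarith
    have d3 : p - T3 ≠ 0 := by nlinarith
    rw [hg]
    constructor
    · intro heq
      field_simp at heq
      linear_combination heq
    · intro hz
      field_simp
      linear_combination hz
  -- existence via IVT
  have hcont : ContinuousOn g (Set.Icc (-T1) T3) := by
    apply Continuous.continuousOn; fun_prop
  have hga : g (-T1) < 0 := by
    simp only [hg]
    nlinarith [mul_pos (mul_pos h1 (show (0:ℝ) < T1 + T3 by linarith))
      (show (0:ℝ) < T1 - T2 by linarith)]
  have hgb : 0 < g T3 := by
    simp only [hg]
    nlinarith [mul_pos (mul_pos (show (0:ℝ) < -T3 by linarith)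
      (show (0:ℝ) < T1 + T3 by linarith)) (show (0:ℝ) < -T3 - T2 by linarith)]
  have hmem : (0:ℝ) ∈ Set.Ioo (g (-T1)) (g T3) := ⟨hga, hgb⟩
  have hsub := intermediate_value_Ioo (by linarith : -T1 ≤ T3) hcont
  obtain ⟨p, hpmem, hgp⟩ := hsub hmem
  refine ⟨p, ⟨hpmem, (key p hpmem).2 hgp⟩, ?_⟩
  rintro q ⟨hqmem, hqeq⟩
  have hgq : g q = 0 := (key q hqmem).1 hqeq
  -- uniqueness
  have hq0 : q < 0 := lt_trans hqmem.2 h3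
  have hp0 : p < 0 := lt_trans hpmem.2 h3
  have hfac : (q - p) * (2*q^2*p^2 - T1*T2*T3*(q+p)) = 0 := by
    simp only [hg] at hgp hgq
    linear_combination p^2 * hgq - q^2 * hgp
  have hM : 0 < 2*q^2*p^2 - T1*T2*T3*(q+p) := by
    have hq2 : 0 < q^2 := by nlinarith
    have hp2' : 0 < p^2 := by nlinarith
    nlinarith [mul_pos hK (show (0:ℝ) < -(q+p) by linarith)]
  have := mul_eq_zero.1 hfac
  rcases this with h' | h'
  · linarith
  · linarith
end

section
/- Let $T_1 > 0$, $T_2 < 0$, $T_3 < 0$ with $-T_1 \ge T_3$. Then every real solution $p$ of $\frac{p}{p+T_1} + \frac{p}{p+T_2} + \frac{p}{p-T_3} = 1$ with $p + T_1 \neq 0$, $p + T_2 \neq 0$, $p - T_3 \neq 0$ lies in $(T_3, -T_1) \cup (0, -T_2)$. -/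
theorem stmt_8 (T1 T2 T3 : ℝ) (h1 : 0 < T1) (h2 : T2 < 0) (h3 : T3 < 0)
    (h : -T1 ≥ T3) :
    (¬ ∃ p : ℝ, -T1 < p ∧ p < T3 ∧
        p / (p + T1) + p / (p + T2) + p / (p - T3) = 1) ∧
    ∀ p : ℝ, p + T1 ≠ 0 → p + T2 ≠ 0 → p - T3 ≠ 0 →
      p / (p + T1) + p / (p + T2) + p / (p - T3) = 1 →
      (T3 < p ∧ p < -T1) ∨ (0 < p ∧ p < -T2) := by
  constructor
  · rintro ⟨p, hp1, hp2, _⟩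
    linarith
  · intro p hpa hpb hpc heq
    -- First: p > T3
    have hT3 : T3 < p := by
      by_contra hle
      push_neg at hle
      have hlt : p < T3 := lt_of_le_of_ne hle (by intro he; exact hpc (by rw [he]; ring))
      have hd1 : p + T1 < 0 := by linarith
      have t1 : 1 < p / (p + T1) := by
        rw [lt_div_iff_of_neg hd1]; linarith
      have t2 : 0 < p / (p + T2) := div_pos_of_neg_of_neg (by linarith) (by linarith)
      have t3 : 0 < p / (p - T3) := div_pos_of_neg_of_neg (by linarith) (by linarith)
      linarith
    rcases lt_trichotomy p (-T1) with hc | hc | hc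
    · exact Or.inl ⟨hT3, hc⟩
    · exact absurd (by rw [hc]; ring) hpa
    · -- p > -T1, show 0 < p < -T2
      have hd1 : 0 < p + T1 := by linarith
      have hd3 : 0 < p - T3 := by linarith
      have hp0 : 0 < p := by
        by_contra hle
        push_neg at hle
        rcases eq_or_lt_of_le hle with he | hlt
        · subst he; simp at heq
        · have hd2 : p + T2 < 0 := by linarith
          have t1 : p / (p + T1) < 0 := div_neg_of_neg_of_pos hlt hd1
          have t3 : p / (p - T3) < 0 := div_neg_of_neg_of_pos hlt hd3
          have key : p / (p + T2) = 1 + (-T2) / (p + T2) := by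
            field_simp
            ring
          have t2' : (-T2) / (p + T2) < 0 := div_neg_of_pos_of_neg (by linarith) hd2
          have t2 : p / (p + T2) < 1 := by rw [key]; linarith
          linarith
      have hpT2 : p < -T2 := by
        by_contra hle
        push_neg at hle
        have hlt : -T2 < p := lt_of_le_of_ne hle (by intro he; exact hpb (by rw [← he]; ring))
        have hd2 : 0 < p + T2 := by linarith
        have t2 : 1 < p / (p + T2) := (one_lt_div hd2).mpr (by linarith)
        have t1 : 0 < p / (p + T1) := div_pos hp0 hd1
        have t3 : 0 < p / (p - T3) := div_pos hp0 hd3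
        linarith
      exact Or.inr ⟨hp0, hpT2⟩
end

section
/- Let $T_1, T_2 < 0$ and $T_3 > 0$ with $\max\{-T_1, -T_2\} < T_3$. Then there exists a unique $p \in (\max\{-T_1, -T_2\}, T_3)$ such that $\frac{p}{p+T_1} + \frac{p}{p+T_2} + \frac{p}{p-T_3} = 1$. -/
/-!
Since `p / (p - a) = 1 + a / (p - a)`, each summand is continuous and strictly decreasing on
`(max (-T1) (-T2), T3)`. At the left endpoint the summand with its pole there tends to `+∞`
while the other stays `≥ 1`; at the right endpoint the last summand tends to `-∞` while the
others stay bounded. A continuous strictly decreasing function from `+∞` to `-∞` on an open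
interval takes every value exactly once.
-/

open Set Filter Topology

lemma existsUnique_eq_of_strictAntiOn_Ioo {f : ℝ → ℝ} {a b : ℝ} (hab : a < b)
    (hcont : ContinuousOn f (Ioo a b)) (hanti : StrictAntiOn f (Ioo a b))
    (hleft : Tendsto f (𝓝[>] a) atTop) (hright : Tendsto f (𝓝[<] b) atBot) (y : ℝ) :
    ∃! x, x ∈ Ioo a b ∧ f x = y := by
  obtain ⟨u, hfu, hu⟩ := ((hleft.eventually_ge_atTop y).and (Ioo_mem_nhdsGT hab)).exists
  obtain ⟨v, hfv, hv⟩ := ((hright.eventually_le_atBot y).and (Ioo_mem_nhdsLT hab)).exists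
  have huv : u ≤ v := (hanti.le_iff_ge hv hu).1 (hfv.trans hfu)
  have hsub : Icc u v ⊆ Ioo a b := Icc_subset_Ioo hu.1 hv.2
  obtain ⟨x, hx, hfx⟩ := intermediate_value_Icc' huv (hcont.mono hsub) ⟨hfv, hfu⟩
  exact ⟨x, ⟨hsub hx, hfx⟩, fun x' hx' => hanti.injOn hx'.1 (hsub hx) (hx'.2.trans hfx.symm)⟩

section DivSub

variable {a : ℝ}

lemma strictAntiOn_div_sub_Ioi (ha : 0 < a) :
    StrictAntiOn (fun p : ℝ => p / (p - a)) (Ioi a) := by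
  intro x (hx : a < x) y (hy : a < y) hxy
  rw [div_lt_div_iff₀ (by linarith) (by linarith)]
  nlinarith

lemma strictAntiOn_div_sub_Iio (ha : 0 < a) :
    StrictAntiOn (fun p : ℝ => p / (p - a)) (Iio a) := by
  intro x (hx : x < a) y (hy : y < a) hxy
  dsimp only
  rw [← neg_div_neg_eq, ← neg_div_neg_eq x, div_lt_div_iff₀ (by linarith) (by linarith)]
  nlinarith

lemma tendsto_div_sub_nhdsGT (ha : 0 < a) :
    Tendsto (fun p : ℝ => p / (p - a)) (𝓝[>] a) atTop := by
  have hden : Tendsto (fun p : ℝ => p - a) (𝓝[>] a) (𝓝[>] 0) := by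
    refine tendsto_nhdsWithin_of_tendsto_nhds_of_eventually_within _ ?_ ?_
    · simpa using (continuous_sub_right a).continuousWithinAt.tendsto (s := Ioi a) (x := a)
    · filter_upwards [self_mem_nhdsWithin] with p (hp : a < p)
      exact sub_pos.2 hp
  exact (tendsto_nhdsWithin_of_tendsto_nhds tendsto_id).pos_mul_atTop ha
    (tendsto_inv_nhdsGT_zero.comp hden)

lemma tendsto_div_sub_nhdsLT (ha : 0 < a) :
    Tendsto (fun p : ℝ => p / (p - a)) (𝓝[<] a) atBot := by
  have hden : Tendsto (fun p : ℝ => p - a) (𝓝[<] a) (𝓝[<] 0) := by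
    refine tendsto_nhdsWithin_of_tendsto_nhds_of_eventually_within _ ?_ ?_
    · simpa using (continuous_sub_right a).continuousWithinAt.tendsto (s := Iio a) (x := a)
    · filter_upwards [self_mem_nhdsWithin] with p (hp : p < a)
      exact sub_neg.2 hp
  exact (tendsto_nhdsWithin_of_tendsto_nhds tendsto_id).pos_mul_atBot ha
    (tendsto_inv_nhdsLT_zero.comp hden)

end DivSub

lemma strictAntiOn_div_add {T : ℝ} (hT : T < 0) :
    StrictAntiOn (fun p : ℝ => p / (p + T)) (Ioi (-T)) := by
  simpa only [sub_neg_eq_add] using strictAntiOn_div_sub_Ioi (neg_pos.2 hT)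

lemma tendsto_div_add_add_div_add_nhdsGT_max {T1 T2 : ℝ} (h1 : T1 < 0) (h2 : T2 < 0) :
    Tendsto (fun p : ℝ => p / (p + T1) + p / (p + T2)) (𝓝[>] max (-T1) (-T2)) atTop := by
  wlog h : -T1 ≤ -T2 generalizing T1 T2
  · simpa only [add_comm, max_comm] using this h2 h1 (le_of_not_ge h)
  rw [max_eq_right h]
  refine tendsto_atTop_add_left_of_le' _ 1 ?_ ?_
  · filter_upwards [self_mem_nhdsWithin] with p (hp : -T2 < p)
    rw [one_le_div (by linarith)]
    linarith
  · simpa only [sub_neg_eq_add] using tendsto_div_sub_nhdsGT (neg_pos.2 h2)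

theorem stmt_9 (T1 T2 T3 : ℝ) (h1 : T1 < 0) (h2 : T2 < 0) (h3 : 0 < T3)
    (h : max (-T1) (-T2) < T3) :
    ∃! p : ℝ, p ∈ Set.Ioo (max (-T1) (-T2)) T3 ∧
      p / (p + T1) + p / (p + T2) + p / (p - T3) = 1 := by
  set m := max (-T1) (-T2)
  have hm1 : -T1 ≤ m := le_max_left _ _
  have hm2 : -T2 ≤ m := le_max_right _ _
  have hcont :
      ContinuousOn (fun p : ℝ => p / (p + T1) + p / (p + T2) + p / (p - T3)) (Ioo m T3) := by
    intro p ⟨hmp, hpT3⟩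
    have : p + T1 ≠ 0 := by linarith
    have : p + T2 ≠ 0 := by linarith
    have : p - T3 ≠ 0 := by linarith
    exact ContinuousAt.continuousWithinAt (by fun_prop (disch := assumption))
  refine existsUnique_eq_of_strictAntiOn_Ioo h hcont ?_ ?_ ?_ 1
  · exact (((strictAntiOn_div_add h1).mono fun p hp => hm1.trans_lt hp.1).add
      ((strictAntiOn_div_add h2).mono fun p hp => hm2.trans_lt hp.1)).add
      ((strictAntiOn_div_sub_Iio h3).mono Ioo_subset_Iio_self)
  · refine (tendsto_div_add_add_div_add_nhdsGT_max h1 h2).atTop_add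
      (tendsto_nhdsWithin_of_tendsto_nhds (ContinuousAt.tendsto ?_))
    have : m - T3 ≠ 0 := by linarith
    fun_prop (disch := assumption)
  · refine Tendsto.add_atBot (tendsto_nhdsWithin_of_tendsto_nhds (ContinuousAt.tendsto ?_))
      (tendsto_div_sub_nhdsLT h3)
    have : T3 + T1 ≠ 0 := by linarith
    have : T3 + T2 ≠ 0 := by linarith
    fun_prop (disch := assumption)
end

section
/- Let $T_3 > 0$ and set $T_1 = T_2 = -T_3$. Then the set of quadruples $(v_1, v_2, v_3, c)$ with $v_1, v_2, v_3, c > 0$ solving $2 x_2 x_3/(v_2 v_3) = c T_1$, $2 x_1 x_3/(v_1 v_3) = c T_2$, $2 x_1 x_2/(v_1 v_2) = c T_3$, where $x_1 = v_2 - v_3 - v_1$, $x_2 = v_1 - v_3 - v_2$, $x_3 = v_1 + v_2 + v_3$, is exactly $\{(v_1, v_2, v_1 + v_2, 8/T_3) : v_1, v_2 > 0\}$. -/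
theorem stmt_11 (T3 : ℝ) (hT3 : 0 < T3) (T1 T2 : ℝ) (hT1 : T1 = -T3) (hT2 : T2 = -T3)
    (v1 v2 v3 c : ℝ) :
    (0 < v1 ∧ 0 < v2 ∧ 0 < v3 ∧ 0 < c ∧
      2 * ((v1 - v3 - v2) * (v1 + v2 + v3)) / (v2 * v3) = c * T1 ∧
      2 * ((v2 - v3 - v1) * (v1 + v2 + v3)) / (v1 * v3) = c * T2 ∧
      2 * ((v2 - v3 - v1) * (v1 - v3 - v2)) / (v1 * v2) = c * T3) ↔
    (0 < v1 ∧ 0 < v2 ∧ v3 = v1 + v2 ∧ c = 8 / T3) := by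
  subst hT1 hT2
  constructor
  · rintro ⟨h1, h2, h3, hc, e1, e2, e3⟩
    rw [div_eq_iff (by positivity)] at e1 e2 e3
    have key0 : c * T3 * v2 * ((v1 + v3) * (v1 + v2 - v3)) = 0 := by
      linear_combination (v2 - v3 - v1) * e1 - (v1 + v2 + v3) * e3
    have h4 : (v1 + v3) * (v1 + v2 - v3) = 0 := by
      have hne : c * T3 * v2 ≠ 0 := by positivity
      exact (mul_eq_zero.mp key0).resolve_left hne
    have h5 : v1 + v2 - v3 = 0 := by
      rcases mul_eq_zero.mp h4 with h | h
      · linarith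
      · exact h
    have hv3 : v3 = v1 + v2 := by linarith
    refine ⟨h1, h2, hv3, ?_⟩
    subst hv3
    have h6 : (c * T3 - 8) * (v1 * v2) = 0 := by linear_combination -e3
    have h7 : c * T3 - 8 = 0 := by
      rcases mul_eq_zero.mp h6 with h | h
      · exact h
      · exact absurd h (by positivity)
    field_simp
    linarith
  · rintro ⟨h1, h2, hv3, hcv⟩
    subst hv3 hcv
    refine ⟨h1, h2, by positivity, by positivity, ?_, ?_, ?_⟩
    · rw [div_eq_iff (by positivity)]; field_simp; ring
    · rw [div_eq_iff (by positivity)]; field_simp; ring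
    · rw [div_eq_iff (by positivity)]; field_simp; ring
end

section
/- Suppose $T_1, T_2 < 0$, $T_3 > 0$, and exactly one of the equations $T_3 = -T_1$ and $T_3 = -T_2$ holds (not both). Then there are no $v_1, v_2, v_3, c > 0$ satisfying $2 x_2 x_3/(v_2 v_3) = c T_1$, $2 x_1 x_3/(v_1 v_3) = c T_2$, $2 x_1 x_2/(v_1 v_2) = c T_3$, where $x_1 = v_2 - v_3 - v_1$, $x_2 = v_1 - v_3 - v_2$, $x_3 = v_1 + v_2 + v_3$. -/
theorem stmt_12 (T1 T2 T3 : ℝ) (h1 : T1 < 0) (h2 : T2 < 0) (h3 : 0 < T3)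
    (h : T1 = -T3 ∨ T2 = -T3) (hnot : ¬ (T1 = -T3 ∧ T2 = -T3)) :
    ¬ ∃ v1 v2 v3 c : ℝ, 0 < v1 ∧ 0 < v2 ∧ 0 < v3 ∧ 0 < c ∧
      2 * ((v1 - v3 - v2) * (v1 + v2 + v3)) / (v2 * v3) = c * T1 ∧
      2 * ((v2 - v3 - v1) * (v1 + v2 + v3)) / (v1 * v3) = c * T2 ∧
      2 * ((v2 - v3 - v1) * (v1 - v3 - v2)) / (v1 * v2) = c * T3 := by
  rintro ⟨v1, v2, v3, c, hv1, hv2, hv3, hc, e1, e2, e3⟩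
  have h23 : (0:ℝ) < v2 * v3 := by positivity
  have h13 : (0:ℝ) < v1 * v3 := by positivity
  have h12 : (0:ℝ) < v1 * v2 := by positivity
  rw [div_eq_iff (ne_of_gt h23)] at e1
  rw [div_eq_iff (ne_of_gt h13)] at e2
  rw [div_eq_iff (ne_of_gt h12)] at e3
  have hx3 : 0 < v1 + v2 + v3 := by linarith
  have hcT1 : c * T1 * (v2 * v3) < 0 :=
    mul_neg_of_neg_of_pos (mul_neg_of_pos_of_neg hc h1) h23
  have hcT2 : c * T2 * (v1 * v3) < 0 :=
    mul_neg_of_neg_of_pos (mul_neg_of_pos_of_neg hc h2) h13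
  -- x2 := v1 - v3 - v2 < 0, x1 := v2 - v3 - v1 < 0
  have hx2 : v1 - v3 - v2 < 0 := by
    by_contra hcon
    push_neg at hcon
    nlinarith [mul_nonneg hcon hx3.le]
  have hx1 : v2 - v3 - v1 < 0 := by
    by_contra hcon
    push_neg at hcon
    nlinarith [mul_nonneg hcon hx3.le]
  -- in either case we derive v1 + v2 - v3 = 0
  have hq : v1 + v2 - v3 = 0 := by
    rcases h with hT | hT
    · rw [hT] at e1
      have key : (v1 - v3 - v2) * ((v1 + v3) * (v1 + v2 - v3)) = 0 := by
        linear_combination (v1 / 2) * e1 + (v3 / 2) * e3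
      rcases mul_eq_zero.mp key with hk | hk
      · exact absurd hk (ne_of_lt hx2)
      · rcases mul_eq_zero.mp hk with hk' | hk'
        · nlinarith
        · exact hk'
    · rw [hT] at e2
      have key : (v2 - v3 - v1) * ((v2 + v3) * (v1 + v2 - v3)) = 0 := by
        linear_combination (v2 / 2) * e2 + (v3 / 2) * e3
      rcases mul_eq_zero.mp key with hk | hk
      · exact absurd hk (ne_of_lt hx1)
      · rcases mul_eq_zero.mp hk with hk' | hk'
        · nlinarith
        · exact hk'
  -- now cT3 = 8, cT1 = -8, cT2 = -8
  have hc3 : c * T3 = 8 := by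
    have : c * T3 * (v1 * v2) = 8 * (v1 * v2) := by
      linear_combination -e3 + (2 * (v1 + v2 - v3) - 4 * v1 - 4 * v2) * hq
    exact mul_right_cancel₀ (ne_of_gt h12) this
  have hc1 : c * T1 = -8 := by
    have : c * T1 * (v2 * v3) = (-8) * (v2 * v3) := by
      linear_combination -e1 + (2 * (v1 + v2 - v3) + 4 * v3 - 4 * v2) * hq
    exact mul_right_cancel₀ (ne_of_gt h23) this
  have hc2 : c * T2 = -8 := by
    have : c * T2 * (v1 * v3) = (-8) * (v1 * v3) := by
      linear_combination -e2 + (2 * (v1 + v2 - v3) + 4 * v3 - 4 * v1) * hq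
    exact mul_right_cancel₀ (ne_of_gt h13) this
  have hT1 : T1 = -T3 := by
    have h0 : c * (T1 + T3) = 0 := by linear_combination hc1 + hc3
    rcases mul_eq_zero.mp h0 with h' | h'
    · exact absurd h' (ne_of_gt hc)
    · linarith
  have hT2 : T2 = -T3 := by
    have h0 : c * (T2 + T3) = 0 := by linear_combination hc2 + hc3
    rcases mul_eq_zero.mp h0 with h' | h'
    · exact absurd h' (ne_of_gt hc)
    · linarith
  exact hnot ⟨hT1, hT2⟩
end

section
/- Let $T_1, T_2, T_3$ be real numbers and consider the system $2 x_2 x_3/(v_2 v_3) = c T_1$, $2 x_1 x_3/(v_1 v_3) = c T_2$, $2 x_1 x_2/(v_1 v_2) = c T_3$ in unknowns $v_1, v_2, v_3, c > 0$, where $x_1 = v_2 - v_1$, $x_2 = v_1 - v_2$, $x_3 = v_1 + v_2$. This system has a solution if and only if either ($T_1 = T_2 = T_3 = 0$) or ($T_3 < 0$, $T_1 + T_2 > 0$, and $T_1 T_2 < 0$). -/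
theorem stmt_14 (T1 T2 T3 : ℝ) :
    (∃ v1 v2 v3 c : ℝ, 0 < v1 ∧ 0 < v2 ∧ 0 < v3 ∧ 0 < c ∧
        2 * ((v1 - v2) * (v1 + v2)) / (v2 * v3) = c * T1 ∧
        2 * ((v2 - v1) * (v1 + v2)) / (v1 * v3) = c * T2 ∧
        2 * ((v2 - v1) * (v1 - v2)) / (v1 * v2) = c * T3) ↔
    ((T1 = 0 ∧ T2 = 0 ∧ T3 = 0) ∨ (T3 < 0 ∧ 0 < T1 + T2 ∧ T1 * T2 < 0)) := by
  constructor
  · rintro ⟨v1, v2, v3, c, h1, h2, h3, hc, e1, e2, e3⟩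
    rw [div_eq_iff (by positivity : (v2 * v3 : ℝ) ≠ 0)] at e1
    rw [div_eq_iff (by positivity : (v1 * v3 : ℝ) ≠ 0)] at e2
    rw [div_eq_iff (by positivity : (v1 * v2 : ℝ) ≠ 0)] at e3
    by_cases hv : v1 = v2
    · left
      subst hv
      simp only [sub_self, zero_mul, mul_zero, zero_sub, neg_zero] at e1 e2 e3
      refine ⟨?_, ?_, ?_⟩
      · have h : c * T1 * (v1 * v3) = 0 := by linarith [e1]
        simpa [mul_eq_zero, hc.ne', h1.ne', h3.ne'] using h
      · have h : c * T2 * (v1 * v3) = 0 := by linarith [e2]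
        simpa [mul_eq_zero, hc.ne', h1.ne', h3.ne'] using h
      · have h : c * T3 * (v1 * v1) = 0 := by linarith [e3]
        simpa [mul_eq_zero, hc.ne', h1.ne'] using h
    · right
      have hd : v1 - v2 ≠ 0 := sub_ne_zero.mpr hv
      have hd2 : 0 < (v1 - v2) ^ 2 := by positivity
      have hs : 0 < v1 + v2 := by linarith
      refine ⟨?_, ?_, ?_⟩
      · have hvv : 0 < c * (v1 * v2) := by positivity
        nlinarith [e3, hvv, hd2]
      · have key : c * (v3 * (v1 * v2)) * (T1 + T2) = 2 * (v1 - v2) ^ 2 * (v1 + v2) := by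
          linear_combination (-v1) * e1 + (-v2) * e2
        have hp : 0 < c * (v3 * (v1 * v2)) := by positivity
        nlinarith [key, hp, mul_pos hd2 hs]
      · have key2 : c ^ 2 * ((v1 * v2) * v3 ^ 2) * (T1 * T2) =
            -(4 * (v1 - v2) ^ 2 * (v1 + v2) ^ 2) := by
          linear_combination (-(c * T2 * (v1 * v3))) * e1 +
            (-(2 * ((v1 - v2) * (v1 + v2)))) * e2
        have hp : 0 < c ^ 2 * ((v1 * v2) * v3 ^ 2) := by positivity
        nlinarith [key2, hp, mul_pos hd2 (mul_pos hs hs)]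
  · rintro (⟨h1, h2, h3⟩ | ⟨h3, hS, hP⟩)
    · exact ⟨1, 1, 1, 1, by norm_num, by norm_num, by norm_num, by norm_num,
        by norm_num [h1], by norm_num [h2], by norm_num [h3]⟩
    · have hT1 : T1 ≠ 0 := fun h => by simp [h] at hP
      have hT2 : T2 ≠ 0 := fun h => by simp [h] at hP
      have hT3 : T3 ≠ 0 := ne_of_lt h3
      have hA : T1 + T2 ≠ 0 := ne_of_gt hS
      have hneg : T2 * (T1 - T2) < 0 := by nlinarith [hP, sq_nonneg T2]
      refine ⟨-(T1 * T2), T2 ^ 2, T2 * T3 * (T1 - T2) / (T1 + T2),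
        2 * (T1 + T2) ^ 2 / (T1 * T2 * T3), ?_, ?_, ?_, ?_, ?_, ?_, ?_⟩
      · linarith
      · positivity
      · apply div_pos _ hS
        nlinarith [mul_pos_of_neg_of_neg h3 hneg]
      · apply div_pos (by positivity)
        exact mul_pos_of_neg_of_neg hP h3
      · have hT12 : T1 - T2 ≠ 0 := sub_ne_zero.mpr (fun h => by nlinarith [sq_nonneg T1])
        field_simp
        ring
      · have hT12 : T1 - T2 ≠ 0 := sub_ne_zero.mpr (fun h => by nlinarith [sq_nonneg T1])
        field_simp
        ring
      · have hT12 : T1 - T2 ≠ 0 := sub_ne_zero.mpr (fun h => by nlinarith [sq_nonneg T1])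
        field_simp
        ring
end

section
/- Let $T_1, T_2, T_3$ be real numbers with $T_3 < 0$, $T_1 + T_2 > 0$, $T_1 T_2 < 0$. Then the solution $(v_1, v_2, v_3, c)$ with $v_1, v_2, v_3, c > 0$ of the system $2 x_2 x_3/(v_2 v_3) = c T_1$, $2 x_1 x_3/(v_1 v_3) = c T_2$, $2 x_1 x_2/(v_1 v_2) = c T_3$, where $x_1 = v_2 - v_1$, $x_2 = v_1 - v_2$, $x_3 = v_1 + v_2$, exists and is unique up to scaling of $(v_1, v_2, v_3)$: if $(v_1, v_2, v_3, c)$ and $(w_1, w_2, w_3, c')$ are both solutions, then $c = c'$ and $(w_1, w_2, w_3) = t(v_1, v_2, v_3)$ for some $t > 0$. -/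
lemma ricci_aux (T1 T2 T3 v1 v2 v3 c : ℝ) (h3 : T3 < 0) (h12 : 0 < T1 + T2)
    (hprod : T1 * T2 < 0)
    (hv1 : 0 < v1) (hv2 : 0 < v2) (hv3 : 0 < v3) (hc : 0 < c)
    (e1 : 2 * ((v1 - v2) * (v1 + v2)) / (v2 * v3) = c * T1)
    (e2 : 2 * ((v2 - v1) * (v1 + v2)) / (v1 * v3) = c * T2)
    (e3 : 2 * ((v2 - v1) * (v1 - v2)) / (v1 * v2) = c * T3) :
    T2 * v1 + T1 * v2 = 0 ∧ c * (T1 * T2 * T3) = 2 * (T1 + T2) ^ 2 ∧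
      v3 * ((T1 + T2) * T2) = (T1 - T2) * T3 * v2 := by
  have hT1 : T1 ≠ 0 := fun h => by simp [h] at hprod
  have hT2 : T2 ≠ 0 := fun h => by simp [h] at hprod
  have h23 : v2 * v3 ≠ 0 := by positivity
  have h13 : v1 * v3 ≠ 0 := by positivity
  have h12' : v1 * v2 ≠ 0 := by positivity
  rw [div_eq_iff h23] at e1
  rw [div_eq_iff h13] at e2
  rw [div_eq_iff h12'] at e3
  -- v1 ≠ v2
  have hne : v1 - v2 ≠ 0 := by
    intro h
    have : c * T3 * (v1 * v2) < 0 :=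
      mul_neg_of_neg_of_pos (mul_neg_of_pos_of_neg hc h3) (mul_pos hv1 hv2)
    rw [← e3, h] at this
    simp at this
  have hsum : (0:ℝ) < v1 + v2 := by linarith
  -- ratio
  have hB : (v1 + v2) * ((v1 - v2) * (T2 * v1 + T1 * v2)) = 0 := by
    linear_combination (T2 * v1 / 2) * e1 - (T1 * v2 / 2) * e2
  have hr : T2 * v1 + T1 * v2 = 0 := by
    rcases mul_eq_zero.1 hB with h | h
    · linarith
    rcases mul_eq_zero.1 h with h | h
    · exact absurd h hne
    · exact h
  have hcid : c * (T1 * T2 * T3) = 2 * (T1 + T2) ^ 2 := by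
    have key : (c * (T1 * T2 * T3) - 2 * (T1 + T2) ^ 2) * v2 ^ 2 = 0 := by
      linear_combination (T2 ^ 2) * e3 +
        (2 * T2 * v1 + 2 * T1 * v2 - 4 * (T1 + T2) * v2 + c * T2 * T3 * v2) * hr
    rcases mul_eq_zero.1 key with h | h
    · linarith
    · exact absurd h (by positivity)
  refine ⟨hr, hcid, ?_⟩
  have hG : (v3 * ((T1 + T2) * T2)) * (2 * (T1 + T2) * v2)
      = ((T1 - T2) * T3 * v2) * (2 * (T1 + T2) * v2) := by
    linear_combination (T3 * T2 ^ 2) * e2 - (T2 * v2 * v3) * hcid +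
      (c * T2 ^ 2 * T3 * v3 + 2 * T3 * (T2 * v1 - T1 * v2)) * hr
  exact mul_right_cancel₀ (by positivity) hG

theorem stmt_15 (T1 T2 T3 : ℝ) (h3 : T3 < 0) (h12 : 0 < T1 + T2) (hprod : T1 * T2 < 0) :
    (∃ v1 v2 v3 c : ℝ, 0 < v1 ∧ 0 < v2 ∧ 0 < v3 ∧ 0 < c ∧
        2 * ((v1 - v2) * (v1 + v2)) / (v2 * v3) = c * T1 ∧
        2 * ((v2 - v1) * (v1 + v2)) / (v1 * v3) = c * T2 ∧
        2 * ((v2 - v1) * (v1 - v2)) / (v1 * v2) = c * T3) ∧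
    ∀ v1 v2 v3 c w1 w2 w3 c' : ℝ,
      (0 < v1 ∧ 0 < v2 ∧ 0 < v3 ∧ 0 < c ∧
        2 * ((v1 - v2) * (v1 + v2)) / (v2 * v3) = c * T1 ∧
        2 * ((v2 - v1) * (v1 + v2)) / (v1 * v3) = c * T2 ∧
        2 * ((v2 - v1) * (v1 - v2)) / (v1 * v2) = c * T3) →
      (0 < w1 ∧ 0 < w2 ∧ 0 < w3 ∧ 0 < c' ∧
        2 * ((w1 - w2) * (w1 + w2)) / (w2 * w3) = c' * T1 ∧
        2 * ((w2 - w1) * (w1 + w2)) / (w1 * w3) = c' * T2 ∧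
        2 * ((w2 - w1) * (w1 - w2)) / (w1 * w2) = c' * T3) →
      c = c' ∧ ∃ t : ℝ, 0 < t ∧ w1 = t * v1 ∧ w2 = t * v2 ∧ w3 = t * v3 := by
  have hT1 : T1 ≠ 0 := fun h => by simp [h] at hprod
  have hT2 : T2 ≠ 0 := fun h => by simp [h] at hprod
  have hT3 : T3 ≠ 0 := ne_of_lt h3
  have h12ne : T1 + T2 ≠ 0 := ne_of_gt h12
  have hTTT : 0 < T1 * T2 * T3 := mul_pos_of_neg_of_neg hprod h3
  have hT2sq : 0 < T2 ^ 2 := by positivity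
  have hv3pos : 0 < (T1 - T2) * T3 * T2 / (T1 + T2) := by
    apply div_pos _ h12
    nlinarith
  have hv1pos : 0 < -T1 * T2 := by nlinarith
  constructor
  · refine ⟨-T1 * T2, T2 ^ 2, (T1 - T2) * T3 * T2 / (T1 + T2),
      2 * (T1 + T2) ^ 2 / (T1 * T2 * T3), hv1pos, hT2sq, hv3pos, by positivity,
      ?_, ?_, ?_⟩
    · rw [div_eq_iff (by positivity : T2 ^ 2 * ((T1 - T2) * T3 * T2 / (T1 + T2)) ≠ 0)]
      field_simp
      ring
    · rw [div_eq_iff (by positivity : -T1 * T2 * ((T1 - T2) * T3 * T2 / (T1 + T2)) ≠ 0)]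
      field_simp
      ring
    · rw [div_eq_iff (by positivity : -T1 * T2 * T2 ^ 2 ≠ 0)]
      field_simp
      ring
  · rintro v1 v2 v3 c w1 w2 w3 c'
      ⟨hv1, hv2, hv3, hc, e1, e2, e3⟩ ⟨hw1, hw2, hw3, hc', f1, f2, f3⟩
    obtain ⟨hrv, hcv, h3v⟩ := ricci_aux T1 T2 T3 v1 v2 v3 c h3 h12 hprod hv1 hv2 hv3 hc e1 e2 e3
    obtain ⟨hrw, hcw, h3w⟩ := ricci_aux T1 T2 T3 w1 w2 w3 c' h3 h12 hprod hw1 hw2 hw3 hc' f1 f2 f3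
    have hcc : c = c' := mul_right_cancel₀ (ne_of_gt hTTT) (hcv.trans hcw.symm)
    refine ⟨hcc, w2 / v2, div_pos hw2 hv2, ?_, ?_, ?_⟩
    · have h : w1 * v2 = v1 * w2 := by
        have : T2 * (w1 * v2 - v1 * w2) = 0 := by linear_combination v2 * hrw - w2 * hrv
        have h0 := (mul_eq_zero.1 this).resolve_left hT2
        linarith
      field_simp
      linarith [h]
    · field_simp
    · have h : w3 * v2 = v3 * w2 := by
        have : ((T1 + T2) * T2) * (w3 * v2 - v3 * w2) = 0 := by
          linear_combination v2 * h3w - w2 * h3v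
        have h0 := (mul_eq_zero.1 this).resolve_left (by
          exact mul_ne_zero h12ne hT2)
        linarith
      field_simp
      linarith [h]
end

section
/- Let $T_1, T_2, T_3$ be real numbers and consider the system $2 x_2 x_3/(v_2 v_3) = c T_1$, $2 x_1 x_3/(v_1 v_3) = c T_2$, $2 x_1 x_2/(v_1 v_2) = c T_3$ in unknowns $v_1, v_2, v_3, c > 0$, where $x_1 = -v_2 - v_1$, $x_2 = v_1 + v_2$, $x_3 = v_1 - v_2$. This system has a solution if and only if either ($T_1 = T_2 = 0$ and $T_3 < 0$) or ($T_3 < 0$, $T_1 + T_2 > 0$, and $T_1 T_2 < 0$). Moreover, in the case $T_1 = T_2 = 0$ and $T_3 < 0$, every solution satisfies $c = -8/T_3$. -/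
theorem stmt_16 (T1 T2 T3 : ℝ) :
    ((∃ v1 v2 v3 c : ℝ, 0 < v1 ∧ 0 < v2 ∧ 0 < v3 ∧ 0 < c ∧
        2 * ((v1 + v2) * (v1 - v2)) / (v2 * v3) = c * T1 ∧
        2 * ((-v2 - v1) * (v1 - v2)) / (v1 * v3) = c * T2 ∧
        2 * ((-v2 - v1) * (v1 + v2)) / (v1 * v2) = c * T3) ↔
      ((T1 = 0 ∧ T2 = 0 ∧ T3 < 0) ∨ (T3 < 0 ∧ 0 < T1 + T2 ∧ T1 * T2 < 0))) ∧
    (T1 = 0 → T2 = 0 → T3 < 0 →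
      ∀ v1 v2 v3 c : ℝ, 0 < v1 → 0 < v2 → 0 < v3 → 0 < c →
        2 * ((v1 + v2) * (v1 - v2)) / (v2 * v3) = c * T1 →
        2 * ((-v2 - v1) * (v1 - v2)) / (v1 * v3) = c * T2 →
        2 * ((-v2 - v1) * (v1 + v2)) / (v1 * v2) = c * T3 →
        c = -8 / T3) := by
  constructor
  · constructor
    · rintro ⟨v1, v2, v3, c, hv1, hv2, hv3, hc, e1, e2, e3⟩
      have h23 : v2 * v3 ≠ 0 := by positivity
      have h13 : v1 * v3 ≠ 0 := by positivity
      have h12 : v1 * v2 ≠ 0 := by positivity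
      have e1' : 2 * ((v1 + v2) * (v1 - v2)) = c * T1 * (v2 * v3) := by
        field_simp at e1; linarith
      have e2' : 2 * ((-v2 - v1) * (v1 - v2)) = c * T2 * (v1 * v3) := by
        field_simp at e2; linarith
      have e3' : 2 * ((-v2 - v1) * (v1 + v2)) = c * T3 * (v1 * v2) := by
        field_simp at e3; linarith
      have hT3 : T3 < 0 := by
        by_contra hcon
        push_neg at hcon
        nlinarith [mul_nonneg (mul_nonneg hc.le hcon) (mul_pos hv1 hv2).le,
          mul_pos (add_pos hv1 hv2) (add_pos hv1 hv2)]
      rcases eq_or_ne v1 v2 with heq | hne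
      · left
        refine ⟨?_, ?_, hT3⟩
        · have h0 : c * T1 * (v2 * v3) = 0 := by rw [← e1', heq]; ring
          rcases mul_eq_zero.1 h0 with h | h
          · rcases mul_eq_zero.1 h with h' | h'
            · exact absurd h' hc.ne'
            · exact h'
          · exact absurd h h23
        · have h0 : c * T2 * (v1 * v3) = 0 := by rw [← e2', heq]; ring
          rcases mul_eq_zero.1 h0 with h | h
          · rcases mul_eq_zero.1 h with h' | h'
            · exact absurd h' hc.ne'
            · exact h'
          · exact absurd h h13
      · right
        have hsq : 0 < (v1 - v2) ^ 2 :=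
          lt_of_le_of_ne (sq_nonneg _) (Ne.symm (pow_ne_zero 2 (sub_ne_zero.2 hne)))
        refine ⟨hT3, ?_, ?_⟩
        · have key : 2 * (v1 + v2) * (v1 - v2) ^ 2 = c * (T1 + T2) * (v1 * v2 * v3) := by
            linear_combination v1 * e1' + v2 * e2'
          by_contra hcon
          push_neg at hcon
          have h2 : c * (T1 + T2) ≤ 0 := mul_nonpos_of_nonneg_of_nonpos hc.le hcon
          have h3' : c * (T1 + T2) * (v1 * v2 * v3) ≤ 0 :=
            mul_nonpos_of_nonpos_of_nonneg h2 (by positivity)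
          nlinarith [mul_pos (add_pos hv1 hv2) hsq]
        · have key : (2 * ((v1 + v2) * (v1 - v2))) * (2 * ((-v2 - v1) * (v1 - v2)))
              = (c * T1 * (v2 * v3)) * (c * T2 * (v1 * v3)) := by rw [e1', e2']
          by_contra hcon
          push_neg at hcon
          have h2 : 0 ≤ c * T1 * (v2 * v3) * (c * T2 * (v1 * v3)) := by
            have hrw : c * T1 * (v2 * v3) * (c * T2 * (v1 * v3))
                = (c * c) * (T1 * T2) * ((v1 * v2) * (v3 * v3)) := by ring
            rw [hrw]
            exact mul_nonneg (mul_nonneg (by positivity) hcon) (by positivity)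
          nlinarith [mul_pos (mul_pos (add_pos hv1 hv2) (add_pos hv1 hv2)) hsq]
    · rintro (⟨h1, h2, h3⟩ | ⟨h3, hsum, hprod⟩)
      · refine ⟨1, 1, 1, -8 / T3, one_pos, one_pos, one_pos,
          div_pos_of_neg_of_neg (by norm_num) h3, ?_, ?_, ?_⟩
        · simp [h1]
        · simp [h2]
        · rw [div_mul_cancel₀ _ (ne_of_lt h3)]; norm_num
      · have hT3 : T3 ≠ 0 := ne_of_lt h3
        have hT1 : T1 ≠ 0 := by rintro rfl; simp at hprod
        have hT2 : T2 ≠ 0 := by rintro rfl; simp at hprod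
        have hsne : T1 + T2 ≠ 0 := ne_of_gt hsum
        rcases mul_neg_iff.1 hprod with ⟨hp1, hp2⟩ | ⟨hp1, hp2⟩
        · have hd : 0 < T1 - T2 := by linarith
          refine ⟨T1, -T2, -T3 * (T1 + T2) / (T1 - T2), 2 * (T1 - T2) ^ 2 / (T3 * (T1 * T2)),
            hp1, by linarith, div_pos (mul_pos (by linarith) hsum) hd,
            div_pos (by nlinarith [mul_pos hd hd]) (mul_pos_of_neg_of_neg h3 hprod), ?_, ?_, ?_⟩
          · field_simp [hT1, hT2, hT3, hsne, hd.ne']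
            ring
          · field_simp [hT1, hT2, hT3, hsne, hd.ne']
            ring
          · field_simp [hT1, hT2, hT3]
            ring
        · have hd : T1 - T2 < 0 := by linarith
          refine ⟨-T1, T2, T3 * (T1 + T2) / (T1 - T2), 2 * (T1 - T2) ^ 2 / (T3 * (T1 * T2)),
            by linarith, hp2, div_pos_of_neg_of_neg (mul_neg_of_neg_of_pos h3 hsum) hd,
            div_pos (by nlinarith [mul_pos_of_neg_of_neg hd hd]) (mul_pos_of_neg_of_neg h3 hprod), ?_, ?_, ?_⟩
          · field_simp [hT1, hT2, hT3, hsne, hd.ne]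
            ring
          · field_simp [hT1, hT2, hT3, hsne, hd.ne]
            ring
          · field_simp [hT1, hT2, hT3]
            ring
  · intro h1 h2 h3 v1 v2 v3 c hv1 hv2 hv3 hc e1 e2 e3
    have h23 : v2 * v3 ≠ 0 := by positivity
    have h12 : v1 * v2 ≠ 0 := by positivity
    have hT3 : T3 ≠ 0 := ne_of_lt h3
    rw [h1, mul_zero, div_eq_zero_iff] at e1
    rcases e1 with h | h
    swap
    · exact absurd h h23
    have heq : v1 = v2 := by
      rcases mul_eq_zero.1 (by linarith : (v1 + v2) * (v1 - v2) = 0) with h' | h'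
      · exact absurd h' (by positivity)
      · linarith
    have e3' : 2 * ((-v2 - v1) * (v1 + v2)) = c * T3 * (v1 * v2) := by
      field_simp at e3; linarith
    have hq : (c * T3 + 8) * (v1 * v2) = 0 := by
      rw [heq] at e3' ⊢
      linear_combination -e3'
    have hq2 : c * T3 + 8 = 0 := by
      rcases mul_eq_zero.1 hq with h' | h'
      · exact h'
      · exact absurd h' h12
    rw [eq_div_iff hT3]
    linarith
end

section
/- Let $T_1, T_2, T_3$ be real numbers and consider the system $2 x_2 x_3/(v_2 v_3) = c T_1$, $2 x_1 x_3/(v_1 v_3) = c T_2$, $2 x_1 x_2/(v_1 v_2) = c T_3$ in unknowns $v_1, v_2, v_3, c > 0$, where $x_1 = -v_1$, $x_2 = v_1$, $x_3 = v_1$. This system has a solution if and only if $T_1 > 0$, $T_2 < 0$, and $T_3 < 0$; moreover, the solution is unique up to scaling of $(v_1, v_2, v_3)$. -/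
/-! With `x₁ = -v₁` and `x₂ = x₃ = v₁` the equations clear to `c T₁ v₂ v₃ = 2 v₁²`,
`c T₂ v₃ = -2 v₁` and `c T₃ v₂ = -2 v₁`, which fix the signs of the `Tᵢ`. Multiplying the last two
and comparing with the first gives `c T₂ T₃ = 2 T₁`, so `c` is determined, and then so are the
ratios `v₂ / v₁ = -2 / (c T₃)` and `v₃ / v₁ = -2 / (c T₂)`. -/

/-- The prescribed Ricci curvature system on `H₃` in the unknowns `v₁, v₂, v₃, c`. -/
def RicciSystem (T1 T2 T3 v1 v2 v3 c : ℝ) : Prop :=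
  0 < v1 ∧ 0 < v2 ∧ 0 < v3 ∧ 0 < c ∧
    2 * (v1 * v1) / (v2 * v3) = c * T1 ∧
    2 * ((-v1) * v1) / (v1 * v3) = c * T2 ∧
    2 * ((-v1) * v1) / (v1 * v2) = c * T3

namespace RicciSystem

variable {T1 T2 T3 v1 v2 v3 c : ℝ}

theorem cleared (h : RicciSystem T1 T2 T3 v1 v2 v3 c) :
    c * T1 * (v2 * v3) = 2 * (v1 * v1) ∧ c * T2 * v3 = -(2 * v1) ∧ c * T3 * v2 = -(2 * v1) := by
  obtain ⟨hv1, hv2, hv3, -, h1, h2, h3⟩ := h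
  have hv1' := hv1.ne'
  have hv2' := hv2.ne'
  have hv3' := hv3.ne'
  refine ⟨?_, ?_, ?_⟩
  · field_simp at h1; linear_combination -h1
  · field_simp at h2; apply mul_left_cancel₀ hv1'; linear_combination -v1 * h2
  · field_simp at h3; apply mul_left_cancel₀ hv1'; linear_combination -v1 * h3

theorem signs (h : RicciSystem T1 T2 T3 v1 v2 v3 c) : 0 < T1 ∧ T2 < 0 ∧ T3 < 0 := by
  obtain ⟨e1, e2, e3⟩ := h.cleared
  obtain ⟨hv1, hv2, hv3, hc, -⟩ := h
  refine ⟨?_, ?_, ?_⟩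
  · nlinarith [mul_pos hv1 hv1, mul_pos hc (mul_pos hv2 hv3)]
  · nlinarith [mul_pos hc hv3]
  · nlinarith [mul_pos hc hv2]

theorem mul_mul_eq (h : RicciSystem T1 T2 T3 v1 v2 v3 c) : c * (T2 * T3) = 2 * T1 := by
  obtain ⟨e1, e2, e3⟩ := h.cleared
  obtain ⟨-, hv2, hv3, hc, -⟩ := h
  apply mul_right_cancel₀ (mul_pos hc (mul_pos hv2 hv3)).ne'
  linear_combination (c * T3 * v2) * e2 - 2 * v1 * e3 - 2 * e1

theorem v2_eq (h : RicciSystem T1 T2 T3 v1 v2 v3 c) : v2 = v1 * (-2 / (c * T3)) := by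
  have hcT3 : c * T3 ≠ 0 := (mul_neg_of_pos_of_neg h.2.2.2.1 h.signs.2.2).ne
  rw [mul_div_assoc', eq_div_iff hcT3]
  linear_combination h.cleared.2.2

theorem v3_eq (h : RicciSystem T1 T2 T3 v1 v2 v3 c) : v3 = v1 * (-2 / (c * T2)) := by
  have hcT2 : c * T2 ≠ 0 := (mul_neg_of_pos_of_neg h.2.2.2.1 h.signs.2.1).ne
  rw [mul_div_assoc', eq_div_iff hcT2]
  linear_combination h.cleared.2.1

end RicciSystem

theorem ricciSystem_of_signs {T1 T2 T3 : ℝ} (hT1 : 0 < T1) (hT2 : T2 < 0) (hT3 : T3 < 0) :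
    let c := 2 * T1 / (T2 * T3)
    RicciSystem T1 T2 T3 1 (-2 / (c * T3)) (-2 / (c * T2)) c := by
  intro c
  have hT23 : 0 < T2 * T3 := mul_pos_of_neg_of_neg hT2 hT3
  have hc : 0 < c := div_pos (by linarith) hT23
  have hcT23 : c * (T2 * T3) = 2 * T1 := div_mul_cancel₀ _ hT23.ne'
  have hcT2 : c * T2 < 0 := mul_neg_of_pos_of_neg hc hT2
  have hcT3 : c * T3 < 0 := mul_neg_of_pos_of_neg hc hT3
  refine ⟨one_pos, div_pos_of_neg_of_neg (by norm_num) hcT3,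
    div_pos_of_neg_of_neg (by norm_num) hcT2, hc, ?_, ?_, ?_⟩ <;> field_simp
  linear_combination hcT23

theorem stmt_17 (T1 T2 T3 : ℝ) :
    ((∃ v1 v2 v3 c : ℝ, 0 < v1 ∧ 0 < v2 ∧ 0 < v3 ∧ 0 < c ∧
        2 * (v1 * v1) / (v2 * v3) = c * T1 ∧
        2 * ((-v1) * v1) / (v1 * v3) = c * T2 ∧
        2 * ((-v1) * v1) / (v1 * v2) = c * T3) ↔
      (0 < T1 ∧ T2 < 0 ∧ T3 < 0)) ∧
    ∀ v1 v2 v3 c w1 w2 w3 c' : ℝ,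
      (0 < v1 ∧ 0 < v2 ∧ 0 < v3 ∧ 0 < c ∧
        2 * (v1 * v1) / (v2 * v3) = c * T1 ∧
        2 * ((-v1) * v1) / (v1 * v3) = c * T2 ∧
        2 * ((-v1) * v1) / (v1 * v2) = c * T3) →
      (0 < w1 ∧ 0 < w2 ∧ 0 < w3 ∧ 0 < c' ∧
        2 * (w1 * w1) / (w2 * w3) = c' * T1 ∧
        2 * ((-w1) * w1) / (w1 * w3) = c' * T2 ∧
        2 * ((-w1) * w1) / (w1 * w2) = c' * T3) →
      c = c' ∧ ∃ t : ℝ, 0 < t ∧ w1 = t * v1 ∧ w2 = t * v2 ∧ w3 = t * v3 := by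
  refine ⟨⟨fun ⟨_, _, _, _, h⟩ => RicciSystem.signs h,
    fun ⟨hT1, hT2, hT3⟩ => ⟨_, _, _, _, ricciSystem_of_signs hT1 hT2 hT3⟩⟩, ?_⟩
  intro v1 v2 v3 c w1 w2 w3 c' (hv : RicciSystem T1 T2 T3 v1 v2 v3 c)
    (hw : RicciSystem T1 T2 T3 w1 w2 w3 c')
  have hT23 : T2 * T3 ≠ 0 := (mul_pos_of_neg_of_neg hv.signs.2.1 hv.signs.2.2).ne'
  have hcc : c = c' := mul_right_cancel₀ hT23 (hv.mul_mul_eq.trans hw.mul_mul_eq.symm)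
  subst hcc
  have hv1 : v1 ≠ 0 := hv.1.ne'
  refine ⟨rfl, w1 / v1, div_pos hw.1 hv.1, by field_simp, ?_, ?_⟩
  · rw [hv.v2_eq, hw.v2_eq]; field_simp
  · rw [hv.v3_eq, hw.v3_eq]; field_simp
end

section
/- Suppose $v_1, v_2, v_3 > 0$ and $c > 0$ solve the $SO(3)$-system $2 x_2 x_3/(v_2 v_3) = c T_1$, $2 x_1 x_3/(v_1 v_3) = c T_2$, $2 x_1 x_2/(v_1 v_2) = c T_3$ with $x_i = v_j + v_k - v_i$ ($\{i,j,k\} = \{1,2,3\}$), where $T_1 = T_2 = T_3 > 0$ and $v_1 v_2 v_3 c = 1$. Then $v_1 = v_2 = v_3$. -/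
theorem stmt_18 (T v1 v2 v3 c : ℝ) (hT : 0 < T)
    (hv1 : 0 < v1) (hv2 : 0 < v2) (hv3 : 0 < v3) (hc : 0 < c)
    (hnorm : v1 * v2 * v3 * c = 1)
    (e1 : 2 * ((v1 + v3 - v2) * (v1 + v2 - v3)) / (v2 * v3) = c * T)
    (e2 : 2 * ((v2 + v3 - v1) * (v1 + v2 - v3)) / (v1 * v3) = c * T)
    (e3 : 2 * ((v2 + v3 - v1) * (v1 + v3 - v2)) / (v1 * v2) = c * T) :
    v1 = v2 ∧ v2 = v3 := by
  have h1 : v1 ≠ 0 := hv1.ne'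
  have h2 : v2 ≠ 0 := hv2.ne'
  have h3 : v3 ≠ 0 := hv3.ne'
  set x1 := v2 + v3 - v1 with hx1
  set x2 := v1 + v3 - v2 with hx2
  set x3 := v1 + v2 - v3 with hx3
  field_simp at e1 e2 e3
  -- e1 : 2 * (x2 * x3) = c * T * (v2 * v3) etc.
  have hx3ne : x3 ≠ 0 := by
    intro h
    rw [h] at e1
    nlinarith [mul_pos hc hT, mul_pos hv2 hv3]
  have hx1ne : x1 ≠ 0 := by
    intro h
    rw [h] at e3
    nlinarith [mul_pos hc hT, mul_pos hv1 hv2]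
  have key12 : x3 * (v1 * x2 - v2 * x1) = 0 := by nlinarith [e1, e2]
  have key23 : x1 * (v2 * x3 - v3 * x2) = 0 := by nlinarith [e2, e3]
  have h12 : v1 * x2 - v2 * x1 = 0 := by
    rcases mul_eq_zero.mp key12 with h | h
    · exact absurd h hx3ne
    · exact h
  have h23 : v2 * x3 - v3 * x2 = 0 := by
    rcases mul_eq_zero.mp key23 with h | h
    · exact absurd h hx1ne
    · exact h
  constructor
  · nlinarith [h12, hv1, hv2, hv3, sq_nonneg (v1 - v2)]
  · nlinarith [h23, hv1, hv2, hv3, sq_nonneg (v2 - v3)]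
end
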